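/- arXiv:2209.07348 — 10 statements merged into one kernel-verified Lean document; each statement's English description precedes it below -/
import Mathlib

section
/- Consider the coupled SIS epidemic–replicator dynamics. If the differentiable functions y, z_S, z_I : [0,∞) → ℝ satisfy the dynamics for all t ≥ 0 and y(0), z_S(0), z_I(0) ∈ [0,1], then y(t) ∈ [0,1], z_S(t) ∈ [0,1] and z_I(t) ∈ [0,1] for all t ≥ 0 (the cube [0,1]^3 is forward invariant). -/
/-!
Each equation of the system has the form `u' = g(t) u + r(t)` with `g` continuous and `r ≥ 0`,
both for `u` a coordinate and for `u` one minus a coordinate; the source term `r` is `0`, except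
for `1 - y`, where it is the recovery flow `γ y ≥ 0`, once `y ≥ 0` is known. Multiplying by the
integrating factor `exp (-∫ g)` makes `u` nondecreasing, so it stays nonnegative.
-/

open Set

theorem exists_hasDerivAt_of_continuousOn_Ici {g : ℝ → ℝ} {a : ℝ} (hg : ContinuousOn g (Ici a)) :
    ∃ G : ℝ → ℝ, ∀ t ≥ a, HasDerivAt G (g t) t := by
  have hext : Continuous fun t => g (max t a) :=
    hg.comp_continuous (continuous_id.max continuous_const) fun t => le_max_right t a
  refine ⟨fun t => ∫ s in a..t, g (max s a), fun t ht => ?_⟩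
  simpa [max_eq_left ht] using (hext.integral_hasStrictDerivAt a t).hasDerivAt

theorem nonneg_of_hasDerivAt_linear {u g r : ℝ → ℝ} {a : ℝ}
    (hu : ∀ t ≥ a, HasDerivAt u (g t * u t + r t) t) (hg : ContinuousOn g (Ici a))
    (hr : ∀ t ≥ a, 0 ≤ r t) (hua : 0 ≤ u a) : ∀ t ≥ a, 0 ≤ u t := by
  obtain ⟨G, hG⟩ := exists_hasDerivAt_of_continuousOn_Ici hg
  set v : ℝ → ℝ := fun t => u t * Real.exp (-G t)
  have hv : ∀ t ≥ a, HasDerivAt v (r t * Real.exp (-G t)) t := fun t ht =>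
    ((hu t ht).mul ((hG t ht).neg.exp)).congr_deriv (by simp only [Pi.neg_apply]; ring)
  have hv_mono : MonotoneOn v (Ici a) :=
    monotoneOn_of_hasDerivWithinAt_nonneg (convex_Ici a) (HasDerivAt.continuousOn hv)
      (fun t ht => (hv t (interior_subset ht)).hasDerivWithinAt)
      fun t ht => mul_nonneg (hr t (interior_subset ht)) (Real.exp_pos _).le
  intro t ht
  have hvt : 0 ≤ v t :=
    (mul_nonneg hua (Real.exp_pos _).le).trans (hv_mono self_mem_Ici ht ht)
  have hut : u t = v t * Real.exp (G t) := by simp [v, mul_assoc, ← Real.exp_add]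
  exact hut ▸ mul_nonneg hvt (Real.exp_pos _).le

theorem mem_Icc_of_hasDerivAt_replicator {u h : ℝ → ℝ} {a : ℝ}
    (hu : ∀ t ≥ a, HasDerivAt u (u t * (1 - u t) * h t) t) (hh : ContinuousOn h (Ici a))
    (hua : u a ∈ Icc (0 : ℝ) 1) : ∀ t ≥ a, u t ∈ Icc (0 : ℝ) 1 := by
  have hu_cont : ContinuousOn u (Ici a) := HasDerivAt.continuousOn hu
  have hu_nonneg := nonneg_of_hasDerivAt_linear (g := fun t => (1 - u t) * h t) (r := 0)
    (fun t ht => (hu t ht).congr_deriv (by simp only [Pi.zero_apply]; ring))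
    (by fun_prop) (fun _ _ => le_rfl) hua.1
  have hu_le := nonneg_of_hasDerivAt_linear (u := fun t => 1 - u t)
    (g := fun t => -(u t * h t)) (r := 0)
    (fun t ht => ((hu t ht).const_sub 1).congr_deriv (by simp only [Pi.zero_apply]; ring))
    (by fun_prop) (fun _ _ => le_rfl) (sub_nonneg.2 hua.2)
  exact fun t ht => ⟨hu_nonneg t ht, sub_nonneg.1 (hu_le t ht)⟩

theorem mem_Icc_of_hasDerivAt_sis {u p : ℝ → ℝ} {a γ : ℝ}
    (hu : ∀ t ≥ a, HasDerivAt u (((1 - u t) * p t - γ) * u t) t) (hp : ContinuousOn p (Ici a))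
    (hγ : 0 ≤ γ) (hua : u a ∈ Icc (0 : ℝ) 1) : ∀ t ≥ a, u t ∈ Icc (0 : ℝ) 1 := by
  have hu_cont : ContinuousOn u (Ici a) := HasDerivAt.continuousOn hu
  have hu_nonneg := nonneg_of_hasDerivAt_linear (g := fun t => (1 - u t) * p t - γ) (r := 0)
    (fun t ht => (hu t ht).congr_deriv (by simp only [Pi.zero_apply]; ring))
    (by fun_prop) (fun _ _ => le_rfl) hua.1
  have hu_le := nonneg_of_hasDerivAt_linear (u := fun t => 1 - u t)
    (g := fun t => -(p t * u t)) (r := fun t => γ * u t)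
    (fun t ht => ((hu t ht).const_sub 1).congr_deriv (by ring))
    (by fun_prop) (fun t ht => mul_nonneg hγ (hu_nonneg t ht)) (sub_nonneg.2 hua.2)
  exact fun t ht => ⟨hu_nonneg t ht, sub_nonneg.1 (hu_le t ht)⟩

theorem sis_cube_forward_invariant_general
    (βu βp α γ cP L cIU cIP : ℝ)
    (hγ : γ > 0)
    (y zS zI : ℝ → ℝ)
    (hy : ∀ t ≥ (0:ℝ), HasDerivAt y
      (((1 - y t) * (zS t + α * (1 - zS t)) * (βu * zI t + βp * (1 - zI t)) - γ) * y t) t)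
    (hzS : ∀ t ≥ (0:ℝ), HasDerivAt zS
      (zS t * (1 - zS t) * (cP - L * (1 - α) * (βu * zI t + βp * (1 - zI t)) * y t)) t)
    (hzI : ∀ t ≥ (0:ℝ), HasDerivAt zI (zI t * (1 - zI t) * (cIP - cIU)) t)
    (hy0 : y 0 ∈ Set.Icc (0:ℝ) 1) (hzS0 : zS 0 ∈ Set.Icc (0:ℝ) 1)
    (hzI0 : zI 0 ∈ Set.Icc (0:ℝ) 1) :
    ∀ t ≥ (0:ℝ), y t ∈ Set.Icc (0:ℝ) 1 ∧ zS t ∈ Set.Icc (0:ℝ) 1 ∧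
      zI t ∈ Set.Icc (0:ℝ) 1 := by
  have hy_cont : ContinuousOn y (Ici 0) := HasDerivAt.continuousOn hy
  have hzS_cont : ContinuousOn zS (Ici 0) := HasDerivAt.continuousOn hzS
  have hzI_cont : ContinuousOn zI (Ici 0) := HasDerivAt.continuousOn hzI
  have hy_mem := mem_Icc_of_hasDerivAt_sis
    (p := fun t => (zS t + α * (1 - zS t)) * (βu * zI t + βp * (1 - zI t)))
    (fun t ht => (hy t ht).congr_deriv (by ring)) (by fun_prop) hγ.le hy0
  have hzS_mem := mem_Icc_of_hasDerivAt_replicator hzS (by fun_prop) hzS0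
  have hzI_mem := mem_Icc_of_hasDerivAt_replicator hzI continuousOn_const hzI0
  exact fun t ht => ⟨hy_mem t ht, hzS_mem t ht, hzI_mem t ht⟩

/-- Forward invariance of the cube [0,1]³ for the coupled SIS
epidemic–replicator dynamics. -/
theorem sis_cube_forward_invariant
    (βu βp α γ cP L cIU cIP : ℝ)
    (hβ : βu > βp) (hβp : βp > 0) (hα : α ∈ Set.Ioo (0:ℝ) 1) (hγ : γ > 0)
    (hcP : cP > 0) (hL : L > 0) (hc : cIU > cIP) (hcIP : cIP ≥ 0)
    (y zS zI : ℝ → ℝ)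
    (hy : ∀ t ≥ (0:ℝ), HasDerivAt y
      (((1 - y t) * (zS t + α * (1 - zS t)) * (βu * zI t + βp * (1 - zI t)) - γ) * y t) t)
    (hzS : ∀ t ≥ (0:ℝ), HasDerivAt zS
      (zS t * (1 - zS t) * (cP - L * (1 - α) * (βu * zI t + βp * (1 - zI t)) * y t)) t)
    (hzI : ∀ t ≥ (0:ℝ), HasDerivAt zI (zI t * (1 - zI t) * (cIP - cIU)) t)
    (hy0 : y 0 ∈ Set.Icc (0:ℝ) 1) (hzS0 : zS 0 ∈ Set.Icc (0:ℝ) 1)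
    (hzI0 : zI 0 ∈ Set.Icc (0:ℝ) 1) :
    ∀ t ≥ (0:ℝ), y t ∈ Set.Icc (0:ℝ) 1 ∧ zS t ∈ Set.Icc (0:ℝ) 1 ∧
      zI t ∈ Set.Icc (0:ℝ) 1 :=
  sis_cube_forward_invariant_general βu βp α γ cP L cIU cIP hγ y zS zI hy hzS hzI hy0 hzS0 hzI0
end

section
/- Let β > 0, γ > 0 with γ ≥ β, and let y : [0,∞) → ℝ be differentiable with y'(t) = ((1−y(t))β − γ)·y(t) for all t ≥ 0 and y(0) ∈ (0,1]. Then y(t) ∈ (0,1] for all t ≥ 0, y is nonincreasing, and y(t) → 0 as t → ∞. -/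
/-!
Writing the equation as `y' = a(t) y` with the continuous coefficient `a(t) = (1 - y t) β - γ`,
backward uniqueness for linear equations shows that `y` can never vanish, so `y > 0`. Since
`γ ≥ β` this gives `y' = (β - γ) y - β y² ≤ -β y² ≤ 0`, so `y` decreases from `y 0 ≤ 1`, and
`(1 / y)' ≥ β` forces `1 / y t ≥ 1 / y 0 + β t → ∞`.
-/

open Set Filter Topology

theorem eqOn_zero_of_hasDerivAt_mul_of_eq_zero_right {a y : ℝ → ℝ} {s t : ℝ}
    (ha : ContinuousOn a (Icc s t)) (hy : ∀ u ∈ Icc s t, HasDerivAt y (a u * y u) u)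
    (ht : y t = 0) : EqOn y 0 (Icc s t) := by
  obtain ⟨C, hC⟩ := isCompact_Icc.exists_bound_of_continuousOn ha
  have hlip : ∀ u ∈ Ioc s t, LipschitzOnWith C.toNNReal (fun x => a u * x) univ := fun u hu =>
    (lipschitzWith_smul (a u)).lipschitzOnWith.weaken (by
      rw [← NNReal.coe_le_coe, coe_nnnorm, Real.coe_toNNReal']
      exact le_max_of_le_left (hC u (Ioc_subset_Icc_self hu)))
  have hcont : ContinuousOn y (Icc s t) := fun u hu => (hy u hu).continuousAt.continuousWithinAt
  exact ODE_solution_unique_of_mem_Icc_left (g := 0) hlip hcont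
    (fun u hu => (hy u (Ioc_subset_Icc_self hu)).hasDerivWithinAt) (fun _ _ => mem_univ _)
    continuousOn_const
    (fun u _ => by simpa [Pi.zero_def] using (hasDerivAt_const u (0 : ℝ)).hasDerivWithinAt)
    (fun _ _ => mem_univ _) ht

theorem pos_of_hasDerivAt_mul {a y : ℝ → ℝ} {s t : ℝ} (hst : s ≤ t)
    (ha : ContinuousOn a (Icc s t)) (hy : ∀ u ∈ Icc s t, HasDerivAt y (a u * y u) u)
    (hs : 0 < y s) : 0 < y t := by
  by_contra! ht
  have hcont : ContinuousOn y (Icc s t) := fun u hu => (hy u hu).continuousAt.continuousWithinAt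
  obtain ⟨c, hc, hyc⟩ := intermediate_value_Icc' hst hcont ⟨ht, hs.le⟩
  have hsub : Icc s c ⊆ Icc s t := Icc_subset_Icc_right hc.2
  exact hs.ne' (eqOn_zero_of_hasDerivAt_mul_of_eq_zero_right (ha.mono hsub)
    (fun u hu => hy u (hsub hu)) hyc (left_mem_Icc.2 hc.1))

theorem inv_add_mul_le_inv_of_hasDerivAt_le_neg_mul_sq {y y' : ℝ → ℝ} {β : ℝ}
    (hy : ∀ t ≥ 0, HasDerivAt y (y' t) t) (hpos : ∀ t ≥ 0, 0 < y t)
    (hy' : ∀ t ≥ 0, y' t ≤ -β * y t ^ 2) {t : ℝ} (ht : 0 ≤ t) :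
    (y 0)⁻¹ + β * t ≤ (y t)⁻¹ := by
  have hmono : MonotoneOn (fun t => (y t)⁻¹ - β * t) (Ici 0) := by
    refine monotoneOn_of_hasDerivWithinAt_nonneg (convex_Ici 0)
      (fun u hu => (((hy u hu).continuousAt.inv₀ (hpos u hu).ne').sub
        (continuousAt_id.const_mul β)).continuousWithinAt)
      (fun u hu => (((hy u (interior_subset hu)).inv (hpos u (interior_subset hu)).ne').sub
        ((hasDerivAt_id u).const_mul β)).hasDerivWithinAt) (fun u hu => ?_)
    have hu₀ : 0 ≤ u := interior_subset hu
    have hyu := hpos u hu₀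
    rw [mul_one, sub_nonneg, le_div_iff₀ (by positivity)]
    linarith [hy' u hu₀]
  have := hmono self_mem_Ici ht ht
  simp only [mul_zero, sub_zero] at this
  linarith

theorem sis_disease_free_convergence_general
    (β γ : ℝ) (hβ : β > 0) (hγβ : γ ≥ β)
    (y : ℝ → ℝ)
    (hy : ∀ t ≥ (0:ℝ), HasDerivAt y (((1 - y t) * β - γ) * y t) t)
    (hy0 : y 0 ∈ Set.Ioc (0:ℝ) 1) :
    (∀ t ≥ (0:ℝ), y t ∈ Set.Ioc (0:ℝ) 1) ∧
    AntitoneOn y (Set.Ici 0) ∧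
    Filter.Tendsto y Filter.atTop (nhds 0) := by
  have hcont : ContinuousOn y (Ici 0) := fun t ht => (hy t ht).continuousAt.continuousWithinAt
  have hpos : ∀ t ≥ (0:ℝ), 0 < y t := fun t ht => by
    have : ContinuousOn y (Icc 0 t) := hcont.mono Icc_subset_Ici_self
    exact pos_of_hasDerivAt_mul ht (by fun_prop) (fun u hu => hy u hu.1) hy0.1
  have hderiv : ∀ t ≥ (0:ℝ), ((1 - y t) * β - γ) * y t ≤ -β * y t ^ 2 := fun t ht => by
    nlinarith [hpos t ht]
  have hanti : AntitoneOn y (Ici 0) :=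
    antitoneOn_of_hasDerivWithinAt_nonpos (convex_Ici 0) hcont
      (fun t ht => (hy t (interior_subset ht)).hasDerivWithinAt)
      (fun t ht => (hderiv t (interior_subset ht)).trans (by nlinarith))
  refine ⟨fun t ht => ⟨hpos t ht, (hanti self_mem_Ici ht ht).trans hy0.2⟩, hanti, ?_⟩
  have hinv : Tendsto (fun t => (y t)⁻¹) atTop atTop :=
    tendsto_atTop_mono' atTop
      (eventually_ge_atTop 0 |>.mono fun t ht =>
        inv_add_mul_le_inv_of_hasDerivAt_le_neg_mul_sq hy hpos hderiv ht)
      (tendsto_atTop_add_const_left _ _ (tendsto_id.const_mul_atTop hβ))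
  simpa only [Pi.inv_def, inv_inv] using hinv.inv_tendsto_atTop

/-- For the scalar SIS dynamics ẏ = ((1−y)β − γ)y with γ ≥ β > 0 and
y(0) ∈ (0,1], the infected proportion stays in (0,1], is nonincreasing, and
converges to 0. -/
theorem sis_disease_free_convergence
    (β γ : ℝ) (hβ : β > 0) (hγ : γ > 0) (hγβ : γ ≥ β)
    (y : ℝ → ℝ)
    (hy : ∀ t ≥ (0:ℝ), HasDerivAt y (((1 - y t) * β - γ) * y t) t)
    (hy0 : y 0 ∈ Set.Ioc (0:ℝ) 1) :
    (∀ t ≥ (0:ℝ), y t ∈ Set.Ioc (0:ℝ) 1) ∧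
    AntitoneOn y (Set.Ici 0) ∧
    Filter.Tendsto y Filter.atTop (nhds 0) :=
  sis_disease_free_convergence_general β γ hβ hγβ y hy hy0
end

section
/- Assume β_p > γ and set y*_u = 1 − γ/β_p. Then y*_u ∈ (0,1), the point (y*_u, 1, 0) is an equilibrium of the coupled SIS epidemic–replicator dynamics, and the Jacobian at (y*_u, 1, 0) is the upper-triangular matrix with diagonal entries (γ − β_p, −(c_P − L(1−α)β_p·y*_u), c_IP − c_IU) and off-diagonal entries d₂ = y*_u(1−y*_u)(1−α)β_p and d₃ = y*_u(1−y*_u)(β_u − β_p) in positions (1,2) and (1,3). All eigenvalues of this Jacobian are negative if y*_u < y*_int, while if y*_u > y*_int the Jacobian has a positive eigenvalue. -/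
/-!
At `E2 = (y, 1, 0)` the factors `z_S (1 - z_S)` and `z_I (1 - z_I)` vanish, so the last two
components of the field vanish and the first reduces to `((1 - y) β_p - γ) y`, which vanishes
at `y = 1 - γ / β_p`. The same vanishing factors kill the off-diagonal entries of the
lower rows of the Jacobian, which is therefore upper triangular; its eigenvalues are its diagonal
entries `γ - β_p < 0`, `c_IP - c_IU < 0` and `L (1 - α) β_p y - c_P`, whose sign is that of
`y - y*_int`.
-/

/-- The vector field of the coupled SIS epidemic–replicator dynamics,
with components (f_y, f_S, f_I) in the variables x = (y, z_S, z_I). -/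
noncomputable def sisField (βu βp α γ cP L cIU cIP : ℝ) (x : Fin 3 → ℝ) : Fin 3 → ℝ :=
  ![((1 - x 0) * (x 1 + α * (1 - x 1)) * (βu * x 2 + βp * (1 - x 2)) - γ) * x 0,
    x 1 * (1 - x 1) * (cP - L * (1 - α) * (βu * x 2 + βp * (1 - x 2)) * x 0),
    x 2 * (1 - x 2) * (cIP - cIU)]

namespace Matrix

variable {n K : Type*} [Fintype n] [LinearOrder n] [Field K]

theorem exists_eigenvector_iff_of_isUpperTriangular {M : Matrix n n K}
    (hM : M.IsUpperTriangular) (μ : K) : (∃ v ≠ 0, M *ᵥ v = μ • v) ↔ ∃ i, M i i = μ := by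
  have hshift : (M - μ • 1).IsUpperTriangular := by
    simpa only [smul_one_eq_diagonal] using hM.sub (blockTriangular_diagonal _)
  have heigen (v : n → K) : M *ᵥ v = μ • v ↔ (M - μ • 1) *ᵥ v = 0 := by
    rw [sub_mulVec, smul_mulVec, one_mulVec, sub_eq_zero]
  simp_rw [heigen, exists_mulVec_eq_zero_iff, det_of_isUpperTriangular hshift,
    Finset.prod_eq_zero_iff, sub_apply, smul_apply, one_apply_eq, smul_eq_mul, mul_one,
    sub_eq_zero, Finset.mem_univ, true_and]

theorem isUpperTriangular_of_fin_three {R : Type*} [Zero R] (a b c d e f : R) :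
    (!![a, b, c; 0, d, e; 0, 0, f]).IsUpperTriangular := by
  intro i j hij
  fin_cases i <;> fin_cases j <;> simp_all

theorem exists_eigenvector_iff_of_fin_three (a b c d e f μ : K) :
    (∃ v ≠ 0, !![a, b, c; 0, d, e; 0, 0, f] *ᵥ v = μ • v) ↔ a = μ ∨ d = μ ∨ f = μ := by
  rw [exists_eigenvector_iff_of_isUpperTriangular (isUpperTriangular_of_fin_three ..),
    Fin.exists_fin_succ]
  simp

end Matrix

def sisJacobian (βu βp α γ cP L cIU cIP : ℝ) (x : Fin 3 → ℝ) : Matrix (Fin 3) (Fin 3) ℝ :=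
  !![(1 - x 0) * (x 1 + α * (1 - x 1)) * (βu * x 2 + βp * (1 - x 2)) - γ
        - (x 1 + α * (1 - x 1)) * (βu * x 2 + βp * (1 - x 2)) * x 0,
      (1 - x 0) * (1 - α) * (βu * x 2 + βp * (1 - x 2)) * x 0,
      (1 - x 0) * (x 1 + α * (1 - x 1)) * (βu - βp) * x 0;
    -(x 1 * (1 - x 1) * L * (1 - α) * (βu * x 2 + βp * (1 - x 2))),
      (1 - 2 * x 1) * (cP - L * (1 - α) * (βu * x 2 + βp * (1 - x 2)) * x 0),
      -(x 1 * (1 - x 1) * L * (1 - α) * (βu - βp) * x 0);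
    0, 0, (1 - 2 * x 2) * (cIP - cIU)]

section SIS

variable {βu βp α γ cP L cIU cIP : ℝ}

theorem hasFDerivAt_sisField (x : Fin 3 → ℝ) :
    HasFDerivAt (sisField βu βp α γ cP L cIU cIP)
      (Matrix.mulVecLin (sisJacobian βu βp α γ cP L cIU cIP x)).toContinuousLinearMap x := by
  have hproj (i : Fin 3) :
      HasFDerivAt (fun x : Fin 3 → ℝ => x i) (ContinuousLinearMap.proj i) x :=
    hasFDerivAt_apply (𝕜 := ℝ) (F' := fun _ => ℝ) i x
  have hrate := ((hproj 2).const_mul βu).add (((hproj 2).const_sub 1).const_mul βp)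
  have hsusc := (hproj 1).add (((hproj 1).const_sub 1).const_mul α)
  have hfy := (((((hproj 0).const_sub 1).mul hsusc).mul hrate).sub_const γ).mul (hproj 0)
  have hfS := ((hproj 1).mul ((hproj 1).const_sub 1)).mul
    (((hrate.const_mul (L * (1 - α))).mul (hproj 0)).const_sub cP)
  have hfI := ((hproj 2).mul ((hproj 2).const_sub 1)).mul_const (cIP - cIU)
  refine hasFDerivAt_pi'' fun i => ?_
  fin_cases i <;>
    [refine hfy.congr_fderiv ?_; refine hfS.congr_fderiv ?_; refine hfI.congr_fderiv ?_] <;>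
    ext v <;>
    simp only [sisJacobian, ContinuousLinearMap.comp_apply, LinearMap.coe_toContinuousLinearMap',
      Matrix.mulVecLin_apply, Matrix.cons_mulVec, Matrix.empty_mulVec, dotProduct,
      Fin.sum_univ_three, Matrix.cons_val, add_apply, neg_apply, smul_apply,
      ContinuousLinearMap.proj_apply, smul_eq_mul, Pi.add_apply, Pi.mul_apply, Fin.zero_eta,
      Fin.mk_one, Fin.reduceFinMk, Matrix.cons_val_zero, Matrix.cons_val_one] <;>
    ring

theorem sisField_endemic_eq_zero {y : ℝ} (hy : (1 - y) * βp = γ) :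
    sisField βu βp α γ cP L cIU cIP ![y, 1, 0] = 0 := by
  ext i
  fin_cases i <;> simp [sisField, hy]

theorem sisJacobian_endemic {y : ℝ} (hy : (1 - y) * βp = γ) :
    sisJacobian βu βp α γ cP L cIU cIP ![y, 1, 0] =
      !![γ - βp, y * (1 - y) * (1 - α) * βp, y * (1 - y) * (βu - βp);
        0, -(cP - L * (1 - α) * βp * y), 0;
        0, 0, cIP - cIU] := by
  ext i j
  fin_cases i <;> fin_cases j <;>
    simp only [sisJacobian, Matrix.of_apply, Matrix.cons_val', Matrix.cons_val_zero,
      Matrix.cons_val_one, Matrix.cons_val, Matrix.cons_val_fin_one, Fin.zero_eta, Fin.mk_one,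
      Fin.reduceFinMk] <;>
    linarith

end SIS

theorem E2_equilibrium_and_stability_general
    (βu βp α γ cP L cIU cIP : ℝ)
    (hα : α ∈ Set.Ioo (0:ℝ) 1) (hγ : γ > 0) (hβpγ : βp > γ)
    (hL : L > 0) (hc : cIU > cIP) :
    (1 - γ / βp) ∈ Set.Ioo (0:ℝ) 1 ∧
    sisField βu βp α γ cP L cIU cIP ![1 - γ / βp, 1, 0] = 0 ∧
    HasFDerivAt (sisField βu βp α γ cP L cIU cIP)
      (LinearMap.toContinuousLinearMap (Matrix.mulVecLin
        (!![γ - βp, (1 - γ / βp) * (1 - (1 - γ / βp)) * (1 - α) * βp,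
              (1 - γ / βp) * (1 - (1 - γ / βp)) * (βu - βp);
            0, -(cP - L * (1 - α) * βp * (1 - γ / βp)), 0;
            0, 0, cIP - cIU])))
      ![1 - γ / βp, 1, 0] ∧
    (1 - γ / βp < cP / (L * (1 - α) * βp) →
      ∀ μ : ℝ, (∃ v : Fin 3 → ℝ, v ≠ 0 ∧
        (!![γ - βp, (1 - γ / βp) * (1 - (1 - γ / βp)) * (1 - α) * βp,
              (1 - γ / βp) * (1 - (1 - γ / βp)) * (βu - βp);
            0, -(cP - L * (1 - α) * βp * (1 - γ / βp)), 0;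
            0, 0, cIP - cIU]).mulVec v = μ • v) → μ < 0) ∧
    (1 - γ / βp > cP / (L * (1 - α) * βp) →
      ∃ μ : ℝ, 0 < μ ∧ ∃ v : Fin 3 → ℝ, v ≠ 0 ∧
        (!![γ - βp, (1 - γ / βp) * (1 - (1 - γ / βp)) * (1 - α) * βp,
              (1 - γ / βp) * (1 - (1 - γ / βp)) * (βu - βp);
            0, -(cP - L * (1 - α) * βp * (1 - γ / βp)), 0;
            0, 0, cIP - cIU]).mulVec v = μ • v) := by
  have hβp : 0 < βp := hγ.trans hβpγ
  have hy : (1 - (1 - γ / βp)) * βp = γ := by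
    rw [sub_sub_cancel, div_mul_cancel₀ _ hβp.ne']
  have hD : 0 < L * (1 - α) * βp := mul_pos (mul_pos hL (sub_pos.2 hα.2)) hβp
  refine ⟨⟨by linarith [(div_lt_one hβp).2 hβpγ], by linarith [div_pos hγ hβp]⟩,
    sisField_endemic_eq_zero hy, by rw [← sisJacobian_endemic hy]; exact hasFDerivAt_sisField _,
    fun hlt μ hμ => ?_, fun hgt => ?_⟩
  · have hstable := (lt_div_iff₀ hD).1 hlt
    rcases (Matrix.exists_eigenvector_iff_of_fin_three ..).1 hμ with rfl | rfl | rfl <;> linarith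
  · have hunstable := (div_lt_iff₀ hD).1 hgt
    exact ⟨_, by linarith, (Matrix.exists_eigenvector_iff_of_fin_three ..).2 (Or.inr (Or.inl rfl))⟩

/-- If β_p > γ then y*_u = 1 − γ/β_p ∈ (0,1), E2 = (y*_u, 1, 0) is an
equilibrium of the coupled SIS dynamics, and the Jacobian there is the
upper-triangular matrix with diagonal (γ − β_p, −(c_P − L(1−α)β_p y*_u), c_IP − c_IU)
and entries d₂ = y*_u(1−y*_u)(1−α)β_p, d₃ = y*_u(1−y*_u)(β_u − β_p) in positions
(1,2) and (1,3).  All its eigenvalues are negative if y*_u < y*_int, and it has a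
positive eigenvalue if y*_u > y*_int. -/
theorem E2_equilibrium_and_stability
    (βu βp α γ cP L cIU cIP : ℝ)
    (hβ : βu > βp) (hα : α ∈ Set.Ioo (0:ℝ) 1) (hγ : γ > 0) (hβpγ : βp > γ)
    (hcP : cP > 0) (hL : L > 0) (hc : cIU > cIP) (hcIP : cIP ≥ 0) :
    (1 - γ / βp) ∈ Set.Ioo (0:ℝ) 1 ∧
    sisField βu βp α γ cP L cIU cIP ![1 - γ / βp, 1, 0] = 0 ∧
    HasFDerivAt (sisField βu βp α γ cP L cIU cIP)
      (LinearMap.toContinuousLinearMap (Matrix.mulVecLin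
        (!![γ - βp, (1 - γ / βp) * (1 - (1 - γ / βp)) * (1 - α) * βp,
              (1 - γ / βp) * (1 - (1 - γ / βp)) * (βu - βp);
            0, -(cP - L * (1 - α) * βp * (1 - γ / βp)), 0;
            0, 0, cIP - cIU])))
      ![1 - γ / βp, 1, 0] ∧
    (1 - γ / βp < cP / (L * (1 - α) * βp) →
      ∀ μ : ℝ, (∃ v : Fin 3 → ℝ, v ≠ 0 ∧
        (!![γ - βp, (1 - γ / βp) * (1 - (1 - γ / βp)) * (1 - α) * βp,
              (1 - γ / βp) * (1 - (1 - γ / βp)) * (βu - βp);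
            0, -(cP - L * (1 - α) * βp * (1 - γ / βp)), 0;
            0, 0, cIP - cIU]).mulVec v = μ • v) → μ < 0) ∧
    (1 - γ / βp > cP / (L * (1 - α) * βp) →
      ∃ μ : ℝ, 0 < μ ∧ ∃ v : Fin 3 → ℝ, v ≠ 0 ∧
        (!![γ - βp, (1 - γ / βp) * (1 - (1 - γ / βp)) * (1 - α) * βp,
              (1 - γ / βp) * (1 - (1 - γ / βp)) * (βu - βp);
            0, -(cP - L * (1 - α) * βp * (1 - γ / βp)), 0;
            0, 0, cIP - cIU]).mulVec v = μ • v) :=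
  E2_equilibrium_and_stability_general βu βp α γ cP L cIU cIP hα hγ hβpγ hL hc
end

section
/- Set y*_int = c_P/(L(1−α)β_p), y*_u = 1 − γ/β_p, y*_p = 1 − γ/(αβ_p), and (when y*_int < 1) z*_S,int = (1/(1−α))·(γ/(β_p(1−y*_int)) − α). Then: (i) if y*_int < 1, the point (y*_int, z*_S,int, 0) makes all three right-hand sides of the coupled SIS epidemic–replicator dynamics vanish; (ii) one has y*_int ∈ (0,1) and z*_S,int ∈ (0,1) if and only if y*_p < y*_int < y*_u. (Hence the interior endemic equilibrium E3 exists precisely when y*_p < y*_int < y*_u.) -/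
/-- With y*_int = c_P/(L(1−α)β_p), y*_u = 1 − γ/β_p,
y*_p = 1 − γ/(αβ_p) and z*_S,int = (1/(1−α))(γ/(β_p(1−y*_int)) − α):
(i) if y*_int < 1 then (y*_int, z*_S,int, 0) annihilates the vector field;
(ii) y*_int ∈ (0,1) and z*_S,int ∈ (0,1) hold if and only if
y*_p < y*_int < y*_u. -/
theorem E3_existence
    (βu βp α γ cP L cIU cIP : ℝ)
    (hβ : βu > βp) (hβp : βp > 0) (hα : α ∈ Set.Ioo (0:ℝ) 1) (hγ : γ > 0)
    (hcP : cP > 0) (hL : L > 0) (hc : cIU > cIP) (hcIP : cIP ≥ 0) :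
    (cP / (L * (1 - α) * βp) < 1 →
      sisField βu βp α γ cP L cIU cIP
        ![cP / (L * (1 - α) * βp),
          (1 / (1 - α)) * (γ / (βp * (1 - cP / (L * (1 - α) * βp))) - α), 0] = 0) ∧
    ((cP / (L * (1 - α) * βp) ∈ Set.Ioo (0:ℝ) 1 ∧
      (1 / (1 - α)) * (γ / (βp * (1 - cP / (L * (1 - α) * βp))) - α) ∈ Set.Ioo (0:ℝ) 1) ↔
      (1 - γ / (α * βp) < cP / (L * (1 - α) * βp) ∧
        cP / (L * (1 - α) * βp) < 1 - γ / βp)) := by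
  obtain ⟨hα0, hα1⟩ := hα
  have h1α : (0:ℝ) < 1 - α := by linarith
  have hD : 0 < L * (1 - α) * βp := by positivity
  set y := cP / (L * (1 - α) * βp) with hy
  have hy0 : 0 < y := div_pos hcP hD
  constructor
  · intro hy1
    have h1y : 0 < 1 - y := by linarith
    have hb : 0 < βp * (1 - y) := by positivity
    set zS := (1 / (1 - α)) * (γ / (βp * (1 - y)) - α) with hzS
    have hzSeq : α + (1 - α) * zS = γ / (βp * (1 - y)) := by
      rw [hzS]; field_simp; ring
    have hcPeq : cP = L * (1 - α) * βp * y := by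
      rw [hy]; field_simp
    funext i
    fin_cases i
    · show ((1 - y) * (zS + α * (1 - zS)) * (βu * 0 + βp * (1 - 0)) - γ) * y = 0
      have h : (1 - y) * (zS + α * (1 - zS)) * (βu * 0 + βp * (1 - 0)) - γ = 0 := by
        have h2 : zS + α * (1 - zS) = α + (1 - α) * zS := by ring
        rw [h2, hzSeq]
        field_simp
        ring
      rw [h, zero_mul]
    · show zS * (1 - zS) * (cP - L * (1 - α) * (βu * 0 + βp * (1 - 0)) * y) = 0
      have h : cP - L * (1 - α) * (βu * 0 + βp * (1 - 0)) * y = 0 := by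
        rw [hcPeq]; ring
      rw [h, mul_zero]
    · show (0 : ℝ) * (1 - 0) * (cIP - cIU) = 0
      ring
  · constructor
    · rintro ⟨⟨_, hy1⟩, hz0, hz1⟩
      have h1y : 0 < 1 - y := by linarith
      have hb : 0 < βp * (1 - y) := by positivity
      set k := γ / (βp * (1 - y)) with hk
      have hkb : k * (βp * (1 - y)) = γ := div_mul_cancel₀ _ (ne_of_gt hb)
      have hid : (1 - α) * ((1 / (1 - α)) * (k - α)) = k - α := by field_simp
      have hkα : α < k := by
        have h3 := mul_pos h1α hz0
        rw [hid] at h3; linarith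
      have hk1 : k < 1 := by
        have h3 := mul_lt_mul_of_pos_left hz1 h1α
        rw [hid, mul_one] at h3; linarith
      constructor
      · have hαβ : 0 < α * βp := by positivity
        have h4 : (1 - y) * (α * βp) < γ := by nlinarith
        have h5 : 1 - y < γ / (α * βp) := (lt_div_iff₀ hαβ).mpr h4
        linarith
      · have h4 : γ < (1 - y) * βp := by nlinarith
        have h5 : γ / βp < 1 - y := (div_lt_iff₀ hβp).mpr h4
        linarith
    · rintro ⟨hp, hu⟩
      have hgb : γ / βp < 1 - y := by linarith
      have h1y : 0 < 1 - y := lt_trans (div_pos hγ hβp) hgb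
      have hy1 : y < 1 := by linarith
      have hb : 0 < βp * (1 - y) := by positivity
      have hkey1 : γ < βp * (1 - y) := by
        have := (div_lt_iff₀ hβp).mp hgb; nlinarith
      have hkey0 : α * (βp * (1 - y)) < γ := by
        have hαβ : 0 < α * βp := by positivity
        have h2 : 1 - y < γ / (α * βp) := by linarith
        have := (lt_div_iff₀ hαβ).mp h2; nlinarith
      set k := γ / (βp * (1 - y)) with hk
      have hkb : k * (βp * (1 - y)) = γ := div_mul_cancel₀ _ (ne_of_gt hb)
      have hkα : α < k := by nlinarith
      have hk1 : k < 1 := by nlinarith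
      refine ⟨⟨hy0, hy1⟩, mul_pos (by positivity) (by linarith), ?_⟩
      have h3 : (1 / (1 - α)) * (k - α) < (1 / (1 - α)) * (1 - α) :=
        mul_lt_mul_of_pos_left (by linarith) (by positivity)
      have h4 : (1 / (1 - α)) * (1 - α) = 1 := by field_simp
      linarith
end

section
/- Assume y*_p < y*_int < y*_u, and set z* = z*_S,int = (1/(1−α))·(γ/(β_p(1−y*_int)) − α). Let Ĵ be the 2×2 real matrix with first row (−γ·y*_int/(1−y*_int), y*_int(1−y*_int)(1−α)β_p) and second row (−z*(1−z*)·L(1−α)β_p, 0). Then trace(Ĵ) < 0 and det(Ĵ) > 0, and consequently every complex eigenvalue of Ĵ has strictly negative real part. (This is the 2×2 block of the Jacobian of the coupled SIS dynamics at the interior endemic equilibrium E3 = (y*_int, z*_S,int, 0), establishing its linear stability.) -/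
private lemma eig_aux (a b c : ℝ) (ha : a < 0) (hb : 0 < b) (hc : 0 < c)
    (μ : ℂ) (v : Fin 2 → ℂ) (hv : v ≠ 0)
    (hMv : ((!![a, b; -c, 0]).map (fun x : ℝ => (x : ℂ))).mulVec v = μ • v) :
    μ.re < 0 := by
  have e0 := congrFun hMv 0
  have e1 := congrFun hMv 1
  simp [Matrix.mulVec, dotProduct, Fin.sum_univ_two, Matrix.map_apply] at e0 e1
  have hbne : ((b : ℝ) : ℂ) ≠ 0 := by exact_mod_cast ne_of_gt hb
  have hv0 : v 0 ≠ 0 := by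
    intro h0
    rw [h0] at e0 e1
    simp only [mul_zero, zero_add, mul_eq_zero] at e0
    have hv1 : v 1 = 0 := by
      rcases e0 with h | h
      · exact absurd h (by exact_mod_cast hbne)
      · exact h
    apply hv
    funext i
    fin_cases i
    · exact h0
    · exact hv1
  have hkey0 : (μ ^ 2 - (a : ℂ) * μ + ((b * c : ℝ) : ℂ)) * v 0 = 0 := by
    push_cast
    linear_combination (-μ) * e0 + (-(b : ℂ)) * e1
  have key : μ ^ 2 - (a : ℂ) * μ + ((b * c : ℝ) : ℂ) = 0 :=
    (mul_eq_zero.mp hkey0).resolve_right hv0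
  have hre := congrArg Complex.re key
  have him := congrArg Complex.im key
  simp only [pow_two, Complex.mul_re, Complex.mul_im, Complex.sub_re, Complex.sub_im,
    Complex.add_re, Complex.add_im, Complex.ofReal_re, Complex.ofReal_im,
    Complex.zero_re, Complex.zero_im] at hre him
  have hbc : 0 < b * c := mul_pos hb hc
  rcases eq_or_ne μ.im 0 with hib | hib
  · by_contra hge
    push_neg at hge
    rw [hib] at hre
    nlinarith [hre, sq_nonneg μ.re]
  · have hmul : (2 * μ.re - a) * μ.im = 0 := by linear_combination him
    have h2a : 2 * μ.re - a = 0 := (mul_eq_zero.mp hmul).resolve_right hib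
    linarith

/-- Under y*_p < y*_int < y*_u, the 2×2 block Ĵ of the Jacobian of the
coupled SIS dynamics at the interior endemic equilibrium E3 = (y*_int, z*_S,int, 0),
namely Ĵ = !![−γ y*_int/(1−y*_int), y*_int(1−y*_int)(1−α)β_p;
−z*(1−z*)L(1−α)β_p, 0] with z* = z*_S,int, has negative trace and positive
determinant, and hence every complex eigenvalue of Ĵ has strictly negative
real part. -/
theorem E3_linear_stability
    (βu βp α γ cP L : ℝ)
    (hβ : βu > βp) (hβp : βp > 0) (hα : α ∈ Set.Ioo (0:ℝ) 1) (hγ : γ > 0)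
    (hcP : cP > 0) (hL : L > 0)
    (h1 : 1 - γ / (α * βp) < cP / (L * (1 - α) * βp))
    (h2 : cP / (L * (1 - α) * βp) < 1 - γ / βp) :
    Matrix.trace
      (!![-γ * (cP / (L * (1 - α) * βp)) / (1 - cP / (L * (1 - α) * βp)),
            (cP / (L * (1 - α) * βp)) * (1 - cP / (L * (1 - α) * βp)) * (1 - α) * βp;
          -(((1 / (1 - α)) * (γ / (βp * (1 - cP / (L * (1 - α) * βp))) - α)) *
              (1 - (1 / (1 - α)) * (γ / (βp * (1 - cP / (L * (1 - α) * βp))) - α)) *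
              (L * (1 - α) * βp)), 0]) < 0 ∧
    0 < Matrix.det
      (!![-γ * (cP / (L * (1 - α) * βp)) / (1 - cP / (L * (1 - α) * βp)),
            (cP / (L * (1 - α) * βp)) * (1 - cP / (L * (1 - α) * βp)) * (1 - α) * βp;
          -(((1 / (1 - α)) * (γ / (βp * (1 - cP / (L * (1 - α) * βp))) - α)) *
              (1 - (1 / (1 - α)) * (γ / (βp * (1 - cP / (L * (1 - α) * βp))) - α)) *
              (L * (1 - α) * βp)), 0]) ∧
    (∀ μ : ℂ, (∃ v : Fin 2 → ℂ, v ≠ 0 ∧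
      ((!![-γ * (cP / (L * (1 - α) * βp)) / (1 - cP / (L * (1 - α) * βp)),
            (cP / (L * (1 - α) * βp)) * (1 - cP / (L * (1 - α) * βp)) * (1 - α) * βp;
          -(((1 / (1 - α)) * (γ / (βp * (1 - cP / (L * (1 - α) * βp))) - α)) *
              (1 - (1 / (1 - α)) * (γ / (βp * (1 - cP / (L * (1 - α) * βp))) - α)) *
              (L * (1 - α) * βp)), 0]).map (fun x : ℝ => (x : ℂ))).mulVec v = μ • v) →
      μ.re < 0) := by
  obtain ⟨hα0, hα1⟩ := hα
  have h1α : (0:ℝ) < 1 - α := by linarith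
  set y : ℝ := cP / (L * (1 - α) * βp) with hy
  have hy0 : 0 < y := by
    apply div_pos hcP
    positivity
  have hγβ : 0 < γ / βp := div_pos hγ hβp
  have hy1 : y < 1 := by linarith
  have h1y : (0:ℝ) < 1 - y := by linarith
  have hden : (0:ℝ) < βp * (1 - y) := mul_pos hβp h1y
  have hαβp : (0:ℝ) < α * βp := mul_pos hα0 hβp
  have hw2 : γ < βp * (1 - y) := by
    have h' : γ / βp < 1 - y := by linarith
    have := (div_lt_iff₀ hβp).1 h'
    nlinarith
  have hw1 : α * (βp * (1 - y)) < γ := by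
    have h' : 1 - y < γ / (α * βp) := by linarith
    have := (lt_div_iff₀ hαβp).1 h'
    nlinarith
  have hwα : α < γ / (βp * (1 - y)) := (lt_div_iff₀ hden).2 (by nlinarith)
  have hw1' : γ / (βp * (1 - y)) < 1 := (div_lt_one hden).2 hw2
  set z : ℝ := (1 / (1 - α)) * (γ / (βp * (1 - y)) - α) with hz
  have hz0 : 0 < z := by
    apply mul_pos
    · positivity
    · linarith
  have hz1 : z < 1 := by
    rw [hz]
    calc (1 / (1 - α)) * (γ / (βp * (1 - y)) - α) < (1 / (1 - α)) * (1 - α) := by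
          apply mul_lt_mul_of_pos_left (by linarith)
          positivity
      _ = 1 := by field_simp
  have h1z : (0:ℝ) < 1 - z := by linarith
  have hA : -γ * y / (1 - y) < 0 := div_neg_of_neg_of_pos (by nlinarith) h1y
  have hB : (0:ℝ) < y * (1 - y) * (1 - α) * βp :=
    mul_pos (mul_pos (mul_pos hy0 h1y) h1α) hβp
  have hC : (0:ℝ) < z * (1 - z) * (L * (1 - α) * βp) :=
    mul_pos (mul_pos hz0 h1z) (by positivity)
  refine ⟨?_, ?_, ?_⟩
  · rw [Matrix.trace_fin_two_of]
    linarith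
  · rw [Matrix.det_fin_two_of]
    nlinarith [mul_pos hB hC]
  · rintro μ ⟨v, hv, hMv⟩
    exact eig_aux _ _ _ hA hB hC μ v hv hMv
end

section
/- Assume y*_u ≤ 0 (equivalently γ ≥ β_p). Then every solution y of the reduced hybrid SIS dynamics with y(0) ∈ (0,1] is nonincreasing on [0,∞) and satisfies y(t) → 0 as t → ∞. -/
/-!
Whatever the regime, the effective infection rate β of the hybrid dynamics is at most β_p, so
with γ ≥ β_p every solution satisfies y' = ((1 - y)β - γ)y ≤ -β_p y². Hence y is nonincreasing,
and it cannot stay above any ε > 0, since then it would decrease at least linearly, at rate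
β_p ε², and eventually become negative.
-/

/-- A solution of the reduced hybrid SIS dynamics obtained under timescale
separation: a differentiable y : [0,∞) → [0,1] following the dynamics with
β = β_p below the threshold y*_int = c_P/(L(1−α)β_p), β = αβ_p above it, and a
convex combination (parametrized by z ∈ [0,1]) at the threshold. -/
def IsReducedSISSol (βp α γ cP L : ℝ) (y : ℝ → ℝ) : Prop :=
  (∀ t ≥ (0:ℝ), y t ∈ Set.Icc (0:ℝ) 1) ∧
  ∀ t ≥ (0:ℝ),
    (y t < cP / (L * (1 - α) * βp) →
      HasDerivAt y (((1 - y t) * βp - γ) * y t) t) ∧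
    (cP / (L * (1 - α) * βp) < y t →
      HasDerivAt y (((1 - y t) * (α * βp) - γ) * y t) t) ∧
    (y t = cP / (L * (1 - α) * βp) → ∃ z ∈ Set.Icc (0:ℝ) 1,
      HasDerivAt y
        (((1 - cP / (L * (1 - α) * βp)) * (z + α * (1 - z)) * βp - γ) *
          (cP / (L * (1 - α) * βp))) t)

open Set Filter Topology

section DerivBound

variable {y y' : ℝ → ℝ} {a : ℝ}

theorem sub_le_mul_sub_of_hasDerivAt_le {C : ℝ} (hy : ∀ t ∈ Ici a, HasDerivAt y (y' t) t)
    (hle : ∀ t ∈ Ici a, y' t ≤ C) {s t : ℝ} (hs : s ∈ Ici a) (hst : s ≤ t) :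
    y t - y s ≤ C * (t - s) := by
  refine (convex_Ici a).image_sub_le_mul_sub_of_deriv_le
    (fun t ht => (hy t ht).continuousAt.continuousWithinAt)
    (fun t ht => (hy t (interior_subset ht)).differentiableAt.differentiableWithinAt)
    (fun t ht => ?_) s hs t (le_trans hs hst) hst
  rw [(hy t (interior_subset ht)).deriv]
  exact hle t (interior_subset ht)

theorem exists_lt_of_hasDerivAt_le_neg_sq {c ε : ℝ} (hc : 0 < c) (hε : 0 < ε)
    (hnonneg : ∀ t ∈ Ici a, 0 ≤ y t) (hy : ∀ t ∈ Ici a, HasDerivAt y (y' t) t)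
    (hle : ∀ t ∈ Ici a, y' t ≤ -c * y t ^ 2) : ∃ T ∈ Ici a, y T < ε := by
  by_contra! hlarge
  have hslope : ∀ t ∈ Ici a, y' t ≤ -(c * ε ^ 2) := fun t ht => by
    have hsq : ε ^ 2 ≤ y t ^ 2 := pow_le_pow_left₀ hε.le (hlarge t ht) 2
    nlinarith [hle t ht]
  set T := a + (y a + 1) / (c * ε ^ 2)
  have hT : a ≤ T := le_add_of_nonneg_right (by have := hnonneg a self_mem_Ici; positivity)
  have hdrop : c * ε ^ 2 * (T - a) = y a + 1 := by
    simp only [T, add_sub_cancel_left]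
    field_simp
  have := sub_le_mul_sub_of_hasDerivAt_le hy hslope self_mem_Ici hT
  linarith [hnonneg T hT]

theorem antitoneOn_and_tendsto_zero_of_hasDerivAt_le_neg_sq {c : ℝ} (hc : 0 < c)
    (hnonneg : ∀ t ∈ Ici a, 0 ≤ y t) (hy : ∀ t ∈ Ici a, HasDerivAt y (y' t) t)
    (hle : ∀ t ∈ Ici a, y' t ≤ -c * y t ^ 2) :
    AntitoneOn y (Ici a) ∧ Tendsto y atTop (𝓝 0) := by
  have hanti : AntitoneOn y (Ici a) := fun s hs t _ hst => by
    have hnonpos : ∀ t ∈ Ici a, y' t ≤ 0 := fun t ht => by nlinarith [hle t ht, sq_nonneg (y t)]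
    linarith [sub_le_mul_sub_of_hasDerivAt_le hy hnonpos hs hst]
  refine ⟨hanti, Metric.tendsto_atTop.2 fun ε hε => ?_⟩
  obtain ⟨T, hT, hyT⟩ := exists_lt_of_hasDerivAt_le_neg_sq hc hε hnonneg hy hle
  refine ⟨T, fun t htT => ?_⟩
  have ht : t ∈ Ici a := le_trans hT htT
  rw [Real.dist_eq, sub_zero, abs_of_nonneg (hnonneg t ht)]
  exact lt_of_le_of_lt (hanti hT ht htT) hyT

end DerivBound

namespace IsReducedSISSol

variable {βp α γ cP L : ℝ} {y : ℝ → ℝ}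

theorem exists_hasDerivAt_rate_le (hβp : 0 ≤ βp) (hα : α ≤ 1)
    (hsol : IsReducedSISSol βp α γ cP L y) {t : ℝ} (ht : 0 ≤ t) :
    ∃ β ≤ βp, HasDerivAt y (((1 - y t) * β - γ) * y t) t := by
  obtain ⟨hbelow, habove, hat⟩ := hsol.2 t ht
  rcases lt_trichotomy (y t) (cP / (L * (1 - α) * βp)) with h | h | h
  · exact ⟨βp, le_rfl, hbelow h⟩
  · obtain ⟨z, ⟨-, hz1⟩, hd⟩ := hat h
    refine ⟨(z + α * (1 - z)) * βp, ?_, ?_⟩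
    · have hconvex : z + α * (1 - z) ≤ 1 := by
        nlinarith [mul_nonneg (sub_nonneg.2 hα) (sub_nonneg.2 hz1)]
      exact mul_le_of_le_one_left hβp hconvex
    · rw [h]
      convert hd using 1
      ring
  · exact ⟨α * βp, mul_le_of_le_one_left hβp hα, habove h⟩

theorem deriv_le_neg_sq (hβp : 0 ≤ βp) (hα : α ≤ 1) (hγ : βp ≤ γ)
    (hsol : IsReducedSISSol βp α γ cP L y) {t : ℝ} (ht : 0 ≤ t) :
    HasDerivAt y (deriv y t) t ∧ deriv y t ≤ -βp * y t ^ 2 := by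
  obtain ⟨β, hβ, hd⟩ := hsol.exists_hasDerivAt_rate_le hβp hα ht
  obtain ⟨hy0, hy1⟩ := hsol.1 t ht
  refine ⟨hd.differentiableAt.hasDerivAt, ?_⟩
  rw [hd.deriv]
  have hrate : ((1 - y t) * β - γ) * y t ≤ ((1 - y t) * βp - βp) * y t := by
    gcongr ((1 - y t) * ?_ - ?_) * y t
  linarith

end IsReducedSISSol

theorem reduced_sis_diseasefree_general
    (βp α γ cP L : ℝ)
    (hβp : βp > 0) (hα : α ∈ Set.Ioo (0:ℝ) 1)
    (hyu : 1 - γ / βp ≤ 0)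
    (y : ℝ → ℝ) (hsol : IsReducedSISSol βp α γ cP L y) :
    AntitoneOn y (Set.Ici 0) ∧ Filter.Tendsto y Filter.atTop (nhds 0) := by
  have hγ : βp ≤ γ := by rwa [sub_nonpos, le_div_iff₀ hβp, one_mul] at hyu
  have hderiv (t : ℝ) (ht : t ∈ Ici 0) := hsol.deriv_le_neg_sq hβp.le hα.2.le hγ ht
  exact antitoneOn_and_tendsto_zero_of_hasDerivAt_le_neg_sq hβp (fun t ht => (hsol.1 t ht).1)
    (fun t ht => (hderiv t ht).1) (fun t ht => (hderiv t ht).2)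

/-- If y*_u = 1 − γ/β_p ≤ 0 (i.e. γ ≥ β_p), every solution of the
reduced hybrid SIS dynamics with y(0) ∈ (0,1] is nonincreasing and converges
to 0. -/
theorem reduced_sis_diseasefree
    (βp α γ cP L : ℝ)
    (hβp : βp > 0) (hα : α ∈ Set.Ioo (0:ℝ) 1) (hγ : γ > 0) (hcP : cP > 0) (hL : L > 0)
    (hyu : 1 - γ / βp ≤ 0)
    (y : ℝ → ℝ) (hsol : IsReducedSISSol βp α γ cP L y) (hy0 : y 0 ∈ Set.Ioc (0:ℝ) 1) :
    AntitoneOn y (Set.Ici 0) ∧ Filter.Tendsto y Filter.atTop (nhds 0) :=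
  reduced_sis_diseasefree_general βp α γ cP L hβp hα hyu y hsol
end

section
/- Assume 0 < y*_u < y*_int. Then every solution y of the reduced hybrid SIS dynamics with y(0) ∈ (0,1] converges monotonically to y*_u: the function t ↦ |y(t) − y*_u| is nonincreasing and y(t) → y*_u as t → ∞. -/
/-!
Write `y*_u = 1 - γ / βp`. Below the threshold `y*_int` the dynamics is the logistic equation
`y' = βp (y*_u - y) y`, and at or above it (where `y > y*_u`) the control only lowers `y'`. Hence
`(y - y*_u) y' ≤ -βp y (y - y*_u) ^ 2` everywhere, so `|y - y*_u|` is nonincreasing. In particular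
`y` cannot cross `y*_u` without staying there, so `y ≥ min (y 0) y*_u > 0`, and then
`|y t - y*_u|` decays like `exp (-βp (min (y 0) y*_u) t)`.
-/

open Set Filter Topology Real

theorem abs_sub_le_mul_exp_of_sub_mul_deriv_le {y y' : ℝ → ℝ} {a k s t : ℝ}
    (hy : ∀ u ≥ s, HasDerivAt y (y' u) u)
    (hle : ∀ u ≥ s, (y u - a) * y' u ≤ -k * (y u - a) ^ 2) (hst : s ≤ t) :
    |y t - a| ≤ |y s - a| * exp (-k * (t - s)) := by
  have hW : ∀ u ≥ s, HasDerivAt (fun u => exp (2 * k * u) * (y u - a) ^ 2)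
      (2 * exp (2 * k * u) * (k * (y u - a) ^ 2 + (y u - a) * y' u)) u := by
    intro u hu
    have hexp : HasDerivAt (fun u => exp (2 * k * u)) (exp (2 * k * u) * (2 * k)) u := by
      simpa using ((hasDerivAt_id u).const_mul (2 * k)).exp
    have hsq : HasDerivAt (fun u => (y u - a) ^ 2) (2 * (y u - a) * y' u) u := by
      simpa using ((hy u hu).sub_const a).fun_pow 2
    exact (hexp.fun_mul hsq).congr_deriv (by ring)
  have hanti : AntitoneOn (fun u => exp (2 * k * u) * (y u - a) ^ 2) (Ici s) := by
    refine antitoneOn_of_hasDerivWithinAt_nonpos (convex_Ici s)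
      (fun u hu => (hW u hu).continuousAt.continuousWithinAt)
      (fun u hu => (hW u (interior_subset hu)).hasDerivWithinAt) fun u hu => ?_
    have hu : s ≤ u := interior_subset hu
    have : k * (y u - a) ^ 2 + (y u - a) * y' u ≤ 0 := by linarith [hle u hu]
    exact mul_nonpos_of_nonneg_of_nonpos (by positivity) this
  have hWst : exp (2 * k * t) * (y t - a) ^ 2 ≤ exp (2 * k * s) * (y s - a) ^ 2 :=
    hanti self_mem_Ici hst hst
  refine abs_le_of_sq_le_sq ?_ (by positivity)
  calc (y t - a) ^ 2 = exp (-(2 * k * t)) * (exp (2 * k * t) * (y t - a) ^ 2) := by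
        rw [← mul_assoc, ← exp_add, neg_add_cancel, exp_zero, one_mul]
    _ ≤ exp (-(2 * k * t)) * (exp (2 * k * s) * (y s - a) ^ 2) := by gcongr
    _ = (|y s - a| * exp (-k * (t - s))) ^ 2 := by
        rw [mul_pow, sq_abs, sq (exp _), ← exp_add, ← mul_assoc, ← exp_add, mul_comm]
        ring_nf

theorem antitoneOn_abs_sub_of_sub_mul_deriv_nonpos {y y' : ℝ → ℝ} {a s : ℝ}
    (hy : ∀ u ≥ s, HasDerivAt y (y' u) u) (hle : ∀ u ≥ s, (y u - a) * y' u ≤ 0) :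
    AntitoneOn (fun u => |y u - a|) (Ici s) := fun u hu v _ huv => by
  simpa using abs_sub_le_mul_exp_of_sub_mul_deriv_le (k := 0) (fun w hw => hy w (hu.trans hw))
    (fun w hw => by simpa using hle w (hu.trans hw)) huv

theorem min_le_of_antitoneOn_abs_sub {y : ℝ → ℝ} {a s t : ℝ} (hy : ContinuousOn y (Ici s))
    (hanti : AntitoneOn (fun u => |y u - a|) (Ici s)) (hst : s ≤ t) : min (y s) a ≤ y t := by
  by_contra! hlt
  rcases le_or_gt (y s) a with hsa | has
  · have := hanti self_mem_Ici hst hst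
    simp only [abs_of_nonpos (sub_nonpos.2 hsa), abs_of_neg (sub_neg.2 (hlt.trans_le
      (min_le_right _ _)))] at this
    linarith [min_eq_left hsa]
  · obtain ⟨u, hu, hyu⟩ := intermediate_value_Icc' hst (hy.mono Icc_subset_Ici_self)
      ⟨(hlt.trans_le (min_le_right _ _)).le, has.le⟩
    have := hanti hu.1 (hu.1.trans hu.2) hu.2
    simp only [hyu, sub_self, abs_zero, abs_nonpos_iff, sub_eq_zero] at this
    linarith [min_le_right (y s) a]

namespace IsReducedSISSol

variable {βp α γ cP L : ℝ} {y : ℝ → ℝ}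

theorem exists_hasDerivAt_le (hsol : IsReducedSISSol βp α γ cP L y) (hβp : 0 ≤ βp) (hα : α ≤ 1)
    {t : ℝ} (ht : 0 ≤ t) :
    ∃ d, HasDerivAt y d t ∧ d ≤ ((1 - y t) * βp - γ) * y t ∧
      (y t < cP / (L * (1 - α) * βp) → d = ((1 - y t) * βp - γ) * y t) := by
  obtain ⟨hy0, hy1⟩ := hsol.1 t ht
  obtain ⟨hbelow, habove, hat⟩ := hsol.2 t ht
  rcases lt_trichotomy (y t) (cP / (L * (1 - α) * βp)) with h | h | h
  · exact ⟨_, hbelow h, le_rfl, fun _ => rfl⟩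
  · obtain ⟨z, ⟨hz0, hz1⟩, hd⟩ := hat h
    refine ⟨_, hd, ?_, fun h' => absurd h h'.ne⟩
    rw [← h]
    nlinarith [mul_nonneg (mul_nonneg (mul_nonneg (sub_nonneg.2 hy1) hβp) hy0)
      (mul_nonneg (sub_nonneg.2 hz1) (sub_nonneg.2 hα))]
  · refine ⟨_, habove h, ?_, fun h' => absurd h' (lt_asymm h)⟩
    nlinarith [mul_nonneg (mul_nonneg (mul_nonneg (sub_nonneg.2 hy1) hβp) hy0) (sub_nonneg.2 hα)]

theorem exists_hasDerivAt_sub_mul_le (hsol : IsReducedSISSol βp α γ cP L y) (hβp : 0 < βp)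
    (hα : α ≤ 1) (hlt : 1 - γ / βp < cP / (L * (1 - α) * βp)) {t : ℝ} (ht : 0 ≤ t) :
    ∃ d, HasDerivAt y d t ∧
      (y t - (1 - γ / βp)) * d ≤ -(βp * y t) * (y t - (1 - γ / βp)) ^ 2 := by
  obtain ⟨d, hd, hle, heq⟩ := hsol.exists_hasDerivAt_le hβp.le hα ht
  have hrate : ((1 - y t) * βp - γ) * y t = -(βp * y t) * (y t - (1 - γ / βp)) := by
    field_simp; ring
  refine ⟨d, hd, ?_⟩
  calc (y t - (1 - γ / βp)) * d ≤ (y t - (1 - γ / βp)) * (((1 - y t) * βp - γ) * y t) := by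
        rcases lt_or_ge (y t) (cP / (L * (1 - α) * βp)) with h | h
        · rw [heq h]
        · exact mul_le_mul_of_nonneg_left hle (by linarith)
    _ = -(βp * y t) * (y t - (1 - γ / βp)) ^ 2 := by rw [hrate]; ring

end IsReducedSISSol

theorem reduced_sis_converges_to_yu_general
    (βp α γ cP L : ℝ)
    (hβp : βp > 0) (hα : α ∈ Set.Ioo (0:ℝ) 1)
    (hyu_pos : 0 < 1 - γ / βp) (hyu_lt : 1 - γ / βp < cP / (L * (1 - α) * βp))
    (y : ℝ → ℝ) (hsol : IsReducedSISSol βp α γ cP L y) (hy0 : y 0 ∈ Set.Ioc (0:ℝ) 1) :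
    AntitoneOn (fun t => |y t - (1 - γ / βp)|) (Set.Ici 0) ∧
    Filter.Tendsto y Filter.atTop (nhds (1 - γ / βp)) := by
  set a := 1 - γ / βp
  choose! y' hy' hle using fun t (ht : (0 : ℝ) ≤ t) =>
    hsol.exists_hasDerivAt_sub_mul_le hβp hα.2.le hyu_lt ht
  have hanti : AntitoneOn (fun t => |y t - a|) (Ici 0) :=
    antitoneOn_abs_sub_of_sub_mul_deriv_nonpos hy' fun u hu => (hle u hu).trans <|
      mul_nonpos_of_nonpos_of_nonneg (neg_nonpos.2 (mul_nonneg hβp.le (hsol.1 u hu).1))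
        (sq_nonneg _)
  set m := min (y 0) a
  have hm : 0 < m := lt_min hy0.1 hyu_pos
  have hcontract : ∀ u ≥ 0, (y u - a) * y' u ≤ -(βp * m) * (y u - a) ^ 2 := fun u hu => by
    have hmu : m ≤ y u := min_le_of_antitoneOn_abs_sub
      (fun v hv => (hy' v hv).continuousAt.continuousWithinAt) hanti hu
    nlinarith [hle u hu, mul_le_mul_of_nonneg_right hmu (mul_nonneg hβp.le (sq_nonneg (y u - a)))]
  have hdecay : ∀ t ≥ 0, |y t - a| ≤ |y 0 - a| * exp (-(βp * m) * t) := fun t ht => by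
    simpa using abs_sub_le_mul_exp_of_sub_mul_deriv_le hy' hcontract ht
  have hexp : Tendsto (fun t => |y 0 - a| * exp (-(βp * m) * t)) atTop (𝓝 0) := by
    simpa using (tendsto_exp_atBot.comp (tendsto_id.const_mul_atTop_of_neg
      (neg_neg_of_pos (mul_pos hβp hm)))).const_mul |y 0 - a|
  exact ⟨hanti, tendsto_iff_norm_sub_tendsto_zero.2 <| squeeze_zero'
    (Eventually.of_forall fun t => norm_nonneg _) ((eventually_ge_atTop 0).mono hdecay) hexp⟩

/-- If 0 < y*_u < y*_int, every solution of the reduced hybrid SIS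
dynamics with y(0) ∈ (0,1] converges monotonically (in the sense that
|y(t) − y*_u| is nonincreasing) to y*_u = 1 − γ/β_p. -/
theorem reduced_sis_converges_to_yu
    (βp α γ cP L : ℝ)
    (hβp : βp > 0) (hα : α ∈ Set.Ioo (0:ℝ) 1) (hγ : γ > 0) (hcP : cP > 0) (hL : L > 0)
    (hyu_pos : 0 < 1 - γ / βp) (hyu_lt : 1 - γ / βp < cP / (L * (1 - α) * βp))
    (y : ℝ → ℝ) (hsol : IsReducedSISSol βp α γ cP L y) (hy0 : y 0 ∈ Set.Ioc (0:ℝ) 1) :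
    AntitoneOn (fun t => |y t - (1 - γ / βp)|) (Set.Ici 0) ∧
    Filter.Tendsto y Filter.atTop (nhds (1 - γ / βp)) :=
  reduced_sis_converges_to_yu_general βp α γ cP L hβp hα hyu_pos hyu_lt y hsol hy0
end

section
/- Assume y*_p < y*_int < y*_u. Then: (i) there exists z ∈ [0,1] such that (1−y*_int)(z+α(1−z))β_p = γ, so the constant function y ≡ y*_int is a solution of the reduced hybrid SIS dynamics (a sliding mode); (ii) every solution y of the reduced hybrid SIS dynamics with y(0) ∈ (0,1] satisfies y(t) → y*_int as t → ∞, with y strictly increasing while y(t) < y*_int and strictly decreasing while y(t) > y*_int. -/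
/-!
Below the threshold `y*_int` the solution follows the logistic field with rate `β_p`, which is
positive there because `y*_int < y*_u`; above it, the field with rate `α β_p` is negative because
`y*_p < y*_int`. Hence both `y ≤ y*_int` and `y ≥ y*_int` are forward invariant, and a solution
that never reaches the threshold is monotone and bounded. Its limit must be `y*_int`: while the
solution stays below a level `l < y*_int` (or above a level `u > y*_int`) its derivative is
bounded away from zero, which would push it out of `[0, 1]`. Positivity of the solution, needed
for the sign of the field, follows from `y' ≥ -γ y` (so `e^{γt} y` is nondecreasing), and the
sliding weight `z` exists by the intermediate value theorem.
-/

open Set Filter Topology Real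

section RealFunction

variable {y : ℝ → ℝ} {a : ℝ}

theorem image_le_of_deriv_neg_above {S b : ℝ} (hab : a ≤ b) (hy : ContinuousOn y (Icc a b))
    (hderiv : ∀ t ∈ Ioo a b, S < y t → deriv y t < 0) (ha : y a ≤ S) : y b ≤ S := by
  by_contra! hb
  set A := Icc a b ∩ y ⁻¹' Iic S
  have hbdd : BddAbove A := ⟨b, fun t ht => ht.1.2⟩
  have hcA : sSup A ∈ A :=
    (hy.preimage_isClosed_of_isClosed isClosed_Icc isClosed_Iic).csSup_mem
      ⟨a, ⟨le_rfl, hab⟩, ha⟩ hbdd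
  set c := sSup A
  have hcb : c < b := hcA.1.2.lt_of_ne fun h => hb.not_ge (h ▸ hcA.2)
  have hgt : ∀ t ∈ Ioc c b, S < y t := fun t ht => by
    by_contra! h
    exact ht.1.not_ge (le_csSup hbdd ⟨⟨hcA.1.1.trans ht.1.le, ht.2⟩, h⟩)
  have hanti : StrictAntiOn y (Icc c b) :=
    strictAntiOn_of_deriv_neg (convex_Icc c b) (hy.mono (Icc_subset_Icc_left hcA.1.1))
      fun t ht => by
        rw [interior_Icc] at ht
        exact hderiv t ⟨hcA.1.1.trans_lt ht.1, ht.2⟩ (hgt t (Ioo_subset_Ioc_self ht))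
  exact (hanti ⟨le_rfl, hcb.le⟩ ⟨hcb.le, le_rfl⟩ hcb).not_ge (hcA.2.trans hb.le)

theorem le_image_of_deriv_pos_below {S b : ℝ} (hab : a ≤ b) (hy : ContinuousOn y (Icc a b))
    (hderiv : ∀ t ∈ Ioo a b, y t < S → 0 < deriv y t) (ha : S ≤ y a) : S ≤ y b :=
  neg_le_neg_iff.1 <| image_le_of_deriv_neg_above (y := -y) (S := -S) hab hy.neg
    (fun t ht h => by rw [deriv.neg]; exact neg_neg_of_pos (hderiv t ht (neg_lt_neg_iff.1 h)))
    (neg_le_neg ha)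

theorem not_bddAbove_image_of_le_deriv {c : ℝ} (hc : 0 < c)
    (hy : ∀ t ≥ a, DifferentiableAt ℝ y t) (hderiv : ∀ t > a, c ≤ deriv y t) :
    ¬BddAbove (y '' Ici a) := by
  rintro ⟨B, hB⟩
  have hgrowth := (convex_Ici a).mul_sub_le_image_sub_of_le_deriv
    (fun t ht => (hy t ht).continuousAt.continuousWithinAt)
    (fun t ht => (hy t (interior_subset ht)).differentiableWithinAt)
    (fun t ht => hderiv t (by rwa [interior_Ici] at ht))
  set t := a + (|B - y a| + 1) / c
  have hat : a ≤ t := le_add_of_nonneg_right (by positivity)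
  have hct : c * (t - a) = |B - y a| + 1 := by simp only [t, add_sub_cancel_left]; field_simp
  have := hgrowth a self_mem_Ici t hat hat
  have := hB ⟨t, hat, rfl⟩
  linarith [le_abs_self (B - y a)]

theorem tendsto_atTop_of_monotoneOn_Ici {S : ℝ} (hmono : MonotoneOn y (Ici a))
    (hle : ∀ t ≥ a, y t ≤ S) (hlt : ∀ l < S, ∃ t ≥ a, l < y t) : Tendsto y atTop (𝓝 S) := by
  refine tendsto_order.2 ⟨fun l hl => ?_, fun u hu => ?_⟩
  · obtain ⟨s, hs, hls⟩ := hlt l hl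
    filter_upwards [eventually_ge_atTop s] with t hst
    exact hls.trans_le (hmono hs (hs.trans hst) hst)
  · filter_upwards [eventually_ge_atTop a] with t ht
    exact (hle t ht).trans_lt hu

theorem pos_of_neg_mul_le_deriv {k : ℝ} (hy : ∀ t ≥ a, DifferentiableAt ℝ y t)
    (hderiv : ∀ t ≥ a, -k * y t ≤ deriv y t) (ha : 0 < y a) {t : ℝ} (ht : a ≤ t) : 0 < y t := by
  set g := fun t => exp (k * t) * y t
  have hg : ∀ t ≥ a, HasDerivAt g (exp (k * t) * (k * y t + deriv y t)) t := fun t ht => by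
    have he : HasDerivAt (fun t => exp (k * t)) (exp (k * t) * k) t := by
      simpa using ((hasDerivAt_id t).const_mul k).exp
    exact (he.mul (hy t ht).hasDerivAt).congr_deriv (by ring)
  have hmono : MonotoneOn g (Ici a) :=
    monotoneOn_of_deriv_nonneg (convex_Ici a)
      (fun t ht => (hg t ht).continuousAt.continuousWithinAt)
      (fun t ht => (hg t (interior_subset ht)).differentiableAt.differentiableWithinAt)
      fun t ht => by
        rw [(hg t (interior_subset ht)).deriv]
        nlinarith [exp_pos (k * t), hderiv t (interior_subset ht)]
  have hgat : exp (k * a) * y a ≤ exp (k * t) * y t := hmono self_mem_Ici ht ht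
  exact pos_of_mul_pos_right ((mul_pos (exp_pos _) ha).trans_le hgat) (exp_pos _).le

end RealFunction

theorem exists_sliding_weight {βp α γ S : ℝ} (hlo : (1 - S) * (α * βp) ≤ γ)
    (hhi : γ ≤ (1 - S) * βp) : ∃ z ∈ Icc (0:ℝ) 1, (1 - S) * (z + α * (1 - z)) * βp = γ := by
  have := intermediate_value_Icc zero_le_one
    (f := fun z => (1 - S) * (z + α * (1 - z)) * βp) (by fun_prop)
  exact this ⟨by simpa [mul_assoc] using hlo, by simpa using hhi⟩

section SIS

variable {βp α γ cP L : ℝ} {y : ℝ → ℝ} {t : ℝ}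

local notation "yInt" => cP / (L * (1 - α) * βp)

theorem isReducedSISSol_const {z : ℝ} (h0 : 0 ≤ yInt) (h1 : yInt ≤ 1) (hz : z ∈ Icc (0:ℝ) 1)
    (hzγ : (1 - yInt) * (z + α * (1 - z)) * βp = γ) :
    IsReducedSISSol βp α γ cP L (fun _ => yInt) :=
  ⟨fun _ _ => ⟨h0, h1⟩, fun t _ => ⟨fun h => absurd h (lt_irrefl _),
    fun h => absurd h (lt_irrefl _),
    fun _ => ⟨z, hz, by rw [hzγ, sub_self, zero_mul]; exact hasDerivAt_const t _⟩⟩⟩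

namespace IsReducedSISSol

variable (hy : IsReducedSISSol βp α γ cP L y)
include hy

theorem differentiableAt (ht : 0 ≤ t) : DifferentiableAt ℝ y t := by
  obtain ⟨hlt, hgt, heq⟩ := hy.2 t ht
  rcases lt_trichotomy (y t) yInt with h | h | h
  · exact (hlt h).differentiableAt
  · obtain ⟨z, -, hz⟩ := heq h
    exact hz.differentiableAt
  · exact (hgt h).differentiableAt

theorem continuousOn : ContinuousOn y (Ici 0) :=
  fun _ ht => (hy.differentiableAt ht).continuousAt.continuousWithinAt

theorem neg_mul_le_deriv (hβp : 0 ≤ βp) (hα : 0 ≤ α) (ht : 0 ≤ t) :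
    -γ * y t ≤ deriv y t := by
  obtain ⟨hy0, hy1⟩ := hy.1 t ht
  obtain ⟨hlt, hgt, heq⟩ := hy.2 t ht
  rcases lt_trichotomy (y t) yInt with h | h | h
  · rw [(hlt h).deriv]
    nlinarith [mul_nonneg (mul_nonneg (sub_nonneg.2 hy1) hβp) hy0]
  · obtain ⟨z, ⟨hz0, hz1⟩, hz⟩ := heq h
    rw [hz.deriv, ← h]
    have hw : 0 ≤ z + α * (1 - z) := by nlinarith
    nlinarith [mul_nonneg (mul_nonneg (mul_nonneg (sub_nonneg.2 hy1) hw) hβp) hy0]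
  · rw [(hgt h).deriv]
    nlinarith [mul_nonneg (mul_nonneg (sub_nonneg.2 hy1) (mul_nonneg hα hβp)) hy0]

theorem pos (hβp : 0 ≤ βp) (hα : 0 ≤ α) (h0 : 0 < y 0) (ht : 0 ≤ t) : 0 < y t :=
  pos_of_neg_mul_le_deriv (fun _ hs => hy.differentiableAt hs)
    (fun _ hs => hy.neg_mul_le_deriv hβp hα hs) h0 ht

theorem deriv_pos_of_lt (hβp : 0 ≤ βp) (hγ : γ < (1 - yInt) * βp) (hpos : 0 < y t)
    (ht : 0 ≤ t) (h : y t < yInt) : 0 < deriv y t := by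
  rw [((hy.2 t ht).1 h).deriv]
  exact mul_pos (by nlinarith) hpos

theorem deriv_neg_of_gt (hαβ : 0 ≤ α * βp) (hγ : (1 - yInt) * (α * βp) < γ) (hS : 0 ≤ yInt)
    (ht : 0 ≤ t) (h : yInt < y t) : deriv y t < 0 := by
  rw [((hy.2 t ht).2.1 h).deriv]
  exact mul_neg_of_neg_of_pos (by nlinarith) (hS.trans_lt h)

theorem tendsto_of_forall_lt (hβp : 0 < βp) (hα : 0 ≤ α) (hγ : γ < (1 - yInt) * βp)
    (h0 : 0 < y 0) (hlt : ∀ t ≥ 0, y t < yInt) : Tendsto y atTop (𝓝 yInt) := by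
  have hpos : ∀ t ≥ 0, 0 < y t := fun _ ht => hy.pos hβp.le hα h0 ht
  have hmono : MonotoneOn y (Ici 0) :=
    (strictMonoOn_of_deriv_pos (convex_Ici 0) hy.continuousOn fun t ht => by
      rw [interior_Ici] at ht
      exact hy.deriv_pos_of_lt hβp.le hγ (hpos t ht.le) ht.le (hlt t ht.le)).monotoneOn
  refine tendsto_atTop_of_monotoneOn_Ici hmono (fun t ht => (hlt t ht).le) fun l hl => ?_
  by_contra! hstall
  -- staying below `l`, the solution grows at least at the rate `((1 - l) βp - γ) y(0) > 0`
  refine not_bddAbove_image_of_le_deriv (c := ((1 - l) * βp - γ) * y 0)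
    (mul_pos (by nlinarith) h0) (fun _ ht => hy.differentiableAt ht) (fun t ht => ?_) ⟨1, ?_⟩
  · rw [((hy.2 t ht.le).1 (hlt t ht.le)).deriv]
    exact mul_le_mul (by nlinarith [hstall t ht.le]) (hmono self_mem_Ici ht.le ht.le) h0.le
      (by nlinarith [hstall t ht.le])
  · rintro _ ⟨t, ht, rfl⟩
    exact (hy.1 t ht).2

theorem tendsto_of_forall_gt (hαβ : 0 ≤ α * βp) (hγ : (1 - yInt) * (α * βp) < γ)
    (hS : 0 ≤ yInt) (hgt : ∀ t ≥ 0, yInt < y t) : Tendsto y atTop (𝓝 yInt) := by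
  have hanti : AntitoneOn y (Ici 0) :=
    (strictAntiOn_of_deriv_neg (convex_Ici 0) hy.continuousOn fun t ht => by
      rw [interior_Ici] at ht
      exact hy.deriv_neg_of_gt hαβ hγ hS ht.le (hgt t ht.le)).antitoneOn
  have := tendsto_atTop_of_monotoneOn_Ici (S := -yInt) hanti.neg
    (fun t ht => neg_le_neg (hgt t ht).le) fun l hl => ?_
  · simpa using this.neg
  by_contra! hstall
  -- staying above `u = -l`, the solution decays at least at the rate `(γ - (1 - u) α βp) u > 0`
  refine not_bddAbove_image_of_le_deriv (y := -y) (a := 0) (c := (γ - (1 + l) * (α * βp)) * -l)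
    (mul_pos (by nlinarith) (hS.trans_lt (lt_neg_of_lt_neg hl)))
    (fun _ ht => (hy.differentiableAt ht).neg) (fun t ht => ?_) ⟨0, ?_⟩
  · rw [deriv.neg, ((hy.2 t ht.le).2.1 (hgt t ht.le)).deriv]
    have hyt : -l ≤ y t := by linarith [hstall t ht.le]
    calc (γ - (1 + l) * (α * βp)) * -l ≤ (γ - (1 - y t) * (α * βp)) * y t :=
          mul_le_mul (by nlinarith) hyt (by linarith) (by nlinarith [hgt t ht.le])
      _ = -(((1 - y t) * (α * βp) - γ) * y t) := by ring
  · rintro _ ⟨t, ht, rfl⟩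
    exact neg_nonpos.2 (hy.1 t ht).1

theorem tendsto (hβp : 0 < βp) (hα : 0 ≤ α) (hS : 0 < yInt) (hγlt : γ < (1 - yInt) * βp)
    (hγgt : (1 - yInt) * (α * βp) < γ) (h0 : 0 < y 0) : Tendsto y atTop (𝓝 yInt) := by
  have hαβ : 0 ≤ α * βp := mul_nonneg hα hβp.le
  have hbelow : ∀ s ≥ 0, y s ≤ yInt → ∀ t ≥ s, y t ≤ yInt := fun s hs h t hst =>
    image_le_of_deriv_neg_above hst (hy.continuousOn.mono fun u hu => hs.trans hu.1)
      (fun u hu => hy.deriv_neg_of_gt hαβ hγgt hS.le (hs.trans hu.1.le)) h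
  have habove : ∀ s ≥ 0, yInt ≤ y s → ∀ t ≥ s, yInt ≤ y t := fun s hs h t hst =>
    le_image_of_deriv_pos_below hst (hy.continuousOn.mono fun u hu => hs.trans hu.1)
      (fun u hu => hy.deriv_pos_of_lt hβp.le hγlt (hy.pos hβp.le hα h0 (hs.trans hu.1.le))
        (hs.trans hu.1.le)) h
  by_cases hhit : ∃ s ≥ 0, y s = yInt
  · obtain ⟨s, hs, hys⟩ := hhit
    refine tendsto_const_nhds.congr' ?_
    filter_upwards [eventually_ge_atTop s] with t hst
    exact (le_antisymm (hbelow s hs hys.le t hst) (habove s hs hys.ge t hst)).symm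
  push Not at hhit
  rcases (hhit 0 le_rfl).lt_or_gt with h | h
  · exact hy.tendsto_of_forall_lt hβp hα hγlt h0 fun t ht =>
      (hbelow 0 le_rfl h.le t ht).lt_of_ne (hhit t ht)
  · exact hy.tendsto_of_forall_gt hαβ hγgt hS.le fun t ht =>
      (habove 0 le_rfl h.le t ht).lt_of_ne' (hhit t ht)

end IsReducedSISSol

end SIS

theorem reduced_sis_sliding_mode_general
    (βp α γ cP L : ℝ)
    (hβp : βp > 0) (hα : α ∈ Set.Ioo (0:ℝ) 1) (hcP : cP > 0) (hL : L > 0)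
    (hyp : 1 - γ / (α * βp) < cP / (L * (1 - α) * βp))
    (hyu : cP / (L * (1 - α) * βp) < 1 - γ / βp) :
    (∃ z ∈ Set.Icc (0:ℝ) 1,
      (1 - cP / (L * (1 - α) * βp)) * (z + α * (1 - z)) * βp = γ) ∧
    IsReducedSISSol βp α γ cP L (fun _ => cP / (L * (1 - α) * βp)) ∧
    (∀ y : ℝ → ℝ, IsReducedSISSol βp α γ cP L y → y 0 ∈ Set.Ioc (0:ℝ) 1 →
      Filter.Tendsto y Filter.atTop (nhds (cP / (L * (1 - α) * βp))) ∧
      (∀ t ≥ (0:ℝ),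
        (y t < cP / (L * (1 - α) * βp) → 0 < deriv y t) ∧
        (cP / (L * (1 - α) * βp) < y t → deriv y t < 0))) := by
  obtain ⟨hα0, hα1⟩ := hα
  have hαβ : 0 < α * βp := mul_pos hα0 hβp
  set S := cP / (L * (1 - α) * βp)
  have hS : 0 < S := div_pos hcP (mul_pos (mul_pos hL (sub_pos.2 hα1)) hβp)
  have hγlt : γ < (1 - S) * βp := (div_lt_iff₀ hβp).1 (by linarith)
  have hγgt : (1 - S) * (α * βp) < γ := (lt_div_iff₀ hαβ).1 (by linarith)
  have hS1 : S ≤ 1 := by nlinarith [mul_pos (sub_pos.2 hα1) hβp]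
  obtain ⟨z, hz, hzγ⟩ := exists_sliding_weight hγgt.le hγlt.le
  refine ⟨⟨z, hz, hzγ⟩, isReducedSISSol_const hS.le hS1 hz hzγ, fun y hy hy0 => ⟨?_, ?_⟩⟩
  · exact hy.tendsto hβp hα0.le hS hγlt hγgt hy0.1
  · exact fun t ht => ⟨hy.deriv_pos_of_lt hβp.le hγlt (hy.pos hβp.le hα0.le hy0.1 ht) ht,
      hy.deriv_neg_of_gt hαβ.le hγgt hS.le ht⟩

/-- If y*_p < y*_int < y*_u then (i) there is z ∈ [0,1] with
(1−y*_int)(z+α(1−z))β_p = γ, so the constant function y ≡ y*_int is a solution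
of the reduced hybrid SIS dynamics (a sliding mode); and (ii) every solution
with y(0) ∈ (0,1] converges to y*_int, with positive derivative (strictly
increasing) while y(t) < y*_int and negative derivative (strictly decreasing)
while y(t) > y*_int. -/
theorem reduced_sis_sliding_mode
    (βp α γ cP L : ℝ)
    (hβp : βp > 0) (hα : α ∈ Set.Ioo (0:ℝ) 1) (hγ : γ > 0) (hcP : cP > 0) (hL : L > 0)
    (hyp : 1 - γ / (α * βp) < cP / (L * (1 - α) * βp))
    (hyu : cP / (L * (1 - α) * βp) < 1 - γ / βp) :
    (∃ z ∈ Set.Icc (0:ℝ) 1,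
      (1 - cP / (L * (1 - α) * βp)) * (z + α * (1 - z)) * βp = γ) ∧
    IsReducedSISSol βp α γ cP L (fun _ => cP / (L * (1 - α) * βp)) ∧
    (∀ y : ℝ → ℝ, IsReducedSISSol βp α γ cP L y → y 0 ∈ Set.Ioc (0:ℝ) 1 →
      Filter.Tendsto y Filter.atTop (nhds (cP / (L * (1 - α) * βp))) ∧
      (∀ t ≥ (0:ℝ),
        (y t < cP / (L * (1 - α) * βp) → 0 < deriv y t) ∧
        (cP / (L * (1 - α) * βp) < y t → deriv y t < 0))) :=
  reduced_sis_sliding_mode_general βp α γ cP L hβp hα hcP hL hyp hyu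
end

section
/- Assume ŷ*_int = c_P/(L(1−α)β̂_p) ∈ (0,1). Then there exists z_R ∈ (0,1) with β̂_p(z_R + α(1−z_R))(1−ŷ*_int) = γ if and only if αβ̂_p(1−ŷ*_int) < γ < β̂_p(1−ŷ*_int); in that case z_R is unique and equals (1/(1−α))·(γ/(β̂_p(1−ŷ*_int)) − α), and the point (s, y, r, z_S, z_I, z_R) = (0, ŷ*_int, 1−ŷ*_int, 0, 0, z_R) is an equilibrium of the coupled SIRI epidemic–replicator dynamics, i.e. all six right-hand sides vanish there. (This equilibrium corresponds to the sliding mode of the reduced hybrid SIRI dynamics at the endemic level ŷ*_int.) -/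
/-!
The map `z ↦ z + α (1 - z)` sends `(0, 1)` increasingly and bijectively onto `(α, 1)`, so the
balance condition `β̂_p (z + α (1 - z)) (1 - ŷ) = γ` has a solution `z ∈ (0, 1)` exactly when
`γ / (β̂_p (1 - ŷ)) ∈ (α, 1)`, and the solution is unique. At `s = z_S = z_I = 0` three of the six
fields vanish trivially, the `y`- and `r`-fields vanish by the balance condition, and the
`z_R`-field vanishes because `y = ŷ*_int` is exactly where the payoff gap
`c_P - L (1 - α) β̂_p y` of protecting is zero.
-/

open Set

section ProtectedMixture

variable {α : ℝ}

theorem add_mul_one_sub_mem_Ioo_iff (hα : α < 1) {z : ℝ} :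
    z + α * (1 - z) ∈ Ioo α 1 ↔ z ∈ Ioo 0 1 := by
  have h1α : 0 < 1 - α := sub_pos.2 hα
  simp only [mem_Ioo]
  constructor <;> rintro ⟨h₁, h₂⟩ <;> constructor <;> nlinarith

theorem eq_of_add_mul_one_sub_eq (hα : α ≠ 1) {z w : ℝ} (h : z + α * (1 - z) = w) :
    z = 1 / (1 - α) * (w - α) := by
  have h1α : 1 - α ≠ 0 := sub_ne_zero.2 hα.symm
  field_simp
  linear_combination h

theorem add_mul_one_sub_of_eq (hα : α ≠ 1) {z w : ℝ} (h : z = 1 / (1 - α) * (w - α)) :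
    z + α * (1 - z) = w := by
  have h1α : 1 - α ≠ 0 := sub_ne_zero.2 hα.symm
  subst h
  field_simp
  ring

theorem exists_mem_Ioo_mul_add_mul_one_sub_eq_iff (hα : α < 1) {B γ : ℝ} (hB : 0 < B) :
    (∃ z ∈ Ioo (0 : ℝ) 1, B * (z + α * (1 - z)) = γ) ↔ α * B < γ ∧ γ < B := by
  constructor
  · rintro ⟨z, hz, rfl⟩
    obtain ⟨hαw, hw1⟩ := (add_mul_one_sub_mem_Ioo_iff hα).2 hz
    exact ⟨by nlinarith, by nlinarith⟩
  · rintro ⟨hlo, hhi⟩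
    have hw : γ / B ∈ Ioo α 1 := ⟨(lt_div_iff₀ hB).2 hlo, (div_lt_one hB).2 hhi⟩
    have hmix := add_mul_one_sub_of_eq hα.ne (z := 1 / (1 - α) * (γ / B - α)) rfl
    refine ⟨_, (add_mul_one_sub_mem_Ioo_iff hα).1 (hmix ▸ hw), ?_⟩
    rw [hmix, mul_div_cancel₀ γ hB.ne']

end ProtectedMixture

theorem siri_sliding_mode_equilibrium_general
    (βu βp βhu βhp α γ cP L cIU cIP Yh : ℝ)
    (hβhp : βhp > 0)
    (hα : α ∈ Set.Ioo (0:ℝ) 1)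
    (hYh : Yh = cP / (L * (1 - α) * βhp)) (hYh01 : Yh ∈ Set.Ioo (0:ℝ) 1) :
    ((∃ zR ∈ Set.Ioo (0:ℝ) 1, βhp * (zR + α * (1 - zR)) * (1 - Yh) = γ) ↔
      (α * βhp * (1 - Yh) < γ ∧ γ < βhp * (1 - Yh))) ∧
    (∀ zR ∈ Set.Ioo (0:ℝ) 1, βhp * (zR + α * (1 - zR)) * (1 - Yh) = γ →
      zR = (1 / (1 - α)) * (γ / (βhp * (1 - Yh)) - α) ∧
      -- the six right-hand sides of the coupled SIRI dynamics vanish at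
      -- (s, y, r, z_S, z_I, z_R) = (0, Yh, 1 − Yh, 0, 0, zR):
      -((βu * 0 + βp * (1 - 0)) * (0 + α * (1 - 0)) * 0 * Yh) = 0 ∧
      (βu * 0 + βp * (1 - 0)) * (0 + α * (1 - 0)) * 0 * Yh +
        (βhu * 0 + βhp * (1 - 0)) * (zR + α * (1 - zR)) * (1 - Yh) * Yh -
        γ * Yh = 0 ∧
      -((βhu * 0 + βhp * (1 - 0)) * (zR + α * (1 - zR)) * (1 - Yh) * Yh) +
        γ * Yh = 0 ∧
      (0:ℝ) * (1 - 0) * (cP - L * (1 - α) * (βu * 0 + βp * (1 - 0)) * Yh) = 0 ∧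
      (0:ℝ) * (1 - 0) * (cIP - cIU) = 0 ∧
      zR * (1 - zR) * (cP - L * (1 - α) * (βhu * 0 + βhp * (1 - 0)) * Yh) = 0) := by
  obtain ⟨hY0, hY1⟩ := hYh01
  have hB : 0 < βhp * (1 - Yh) := mul_pos hβhp (sub_pos.2 hY1)
  have hden : L * (1 - α) * βhp ≠ 0 := fun h => hY0.ne' (by rw [hYh, h, div_zero])
  have hcP : Yh * (L * (1 - α) * βhp) = cP := (eq_div_iff hden).1 hYh
  have hcomm : ∀ z, βhp * (z + α * (1 - z)) * (1 - Yh) = βhp * (1 - Yh) * (z + α * (1 - z)) :=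
    fun z => by ring
  simp only [hcomm]
  refine ⟨by rw [exists_mem_Ioo_mul_add_mul_one_sub_eq_iff hα.2 hB, mul_assoc],
    fun zR _ hbal => ⟨?_, by ring, by linear_combination Yh * hbal,
      by linear_combination -Yh * hbal, by ring, by ring,
      by linear_combination -zR * (1 - zR) * hcP⟩⟩
  refine eq_of_add_mul_one_sub_eq hα.2.ne ?_
  rw [← hbal, mul_div_cancel_left₀ _ hB.ne']

/-- With ŷ*_int = c_P/(L(1−α)β̂_p) ∈ (0,1): there exists
z_R ∈ (0,1) with β̂_p(z_R + α(1−z_R))(1−ŷ*_int) = γ iff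
αβ̂_p(1−ŷ*_int) < γ < β̂_p(1−ŷ*_int); in that case z_R is unique, equals
(1/(1−α))(γ/(β̂_p(1−ŷ*_int)) − α), and the point
(s, y, r, z_S, z_I, z_R) = (0, ŷ*_int, 1−ŷ*_int, 0, 0, z_R) annihilates all six
right-hand sides of the coupled SIRI epidemic–replicator dynamics. -/
theorem siri_sliding_mode_equilibrium
    (βu βp βhu βhp α γ cP L cIU cIP Yh : ℝ)
    (hβ : βu > βp) (hβp : βp > 0) (hβh : βhu > βhp) (hβhp : βhp > 0)
    (hα : α ∈ Set.Ioo (0:ℝ) 1) (hγ : γ > 0)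
    (hcP : cP > 0) (hL : L > 0) (hc : cIU > cIP) (hcIP : cIP ≥ 0)
    (hYh : Yh = cP / (L * (1 - α) * βhp)) (hYh01 : Yh ∈ Set.Ioo (0:ℝ) 1) :
    ((∃ zR ∈ Set.Ioo (0:ℝ) 1, βhp * (zR + α * (1 - zR)) * (1 - Yh) = γ) ↔
      (α * βhp * (1 - Yh) < γ ∧ γ < βhp * (1 - Yh))) ∧
    (∀ zR ∈ Set.Ioo (0:ℝ) 1, βhp * (zR + α * (1 - zR)) * (1 - Yh) = γ →
      zR = (1 / (1 - α)) * (γ / (βhp * (1 - Yh)) - α) ∧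
      -- the six right-hand sides of the coupled SIRI dynamics vanish at
      -- (s, y, r, z_S, z_I, z_R) = (0, Yh, 1 − Yh, 0, 0, zR):
      -((βu * 0 + βp * (1 - 0)) * (0 + α * (1 - 0)) * 0 * Yh) = 0 ∧
      (βu * 0 + βp * (1 - 0)) * (0 + α * (1 - 0)) * 0 * Yh +
        (βhu * 0 + βhp * (1 - 0)) * (zR + α * (1 - zR)) * (1 - Yh) * Yh -
        γ * Yh = 0 ∧
      -((βhu * 0 + βhp * (1 - 0)) * (zR + α * (1 - zR)) * (1 - Yh) * Yh) +
        γ * Yh = 0 ∧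
      (0:ℝ) * (1 - 0) * (cP - L * (1 - α) * (βu * 0 + βp * (1 - 0)) * Yh) = 0 ∧
      (0:ℝ) * (1 - 0) * (cIP - cIU) = 0 ∧
      zR * (1 - zR) * (cP - L * (1 - α) * (βhu * 0 + βhp * (1 - 0)) * Yh) = 0) :=
  siri_sliding_mode_equilibrium_general βu βp βhu βhp α γ cP L cIU cIP Yh hβhp hα hYh hYh01
end

section
/- Let β_p > β̂_p > 0, γ > 0, and set y_E2 = 1 − γ/β̂_p. For real numbers y and s with y ≥ 0 and s ≥ 0, define W := 2(y − y_E2)·(β_p·s + β̂_p·(1 − s − y) − γ)·y (the derivative of the Lyapunov function V(y) = (y − y_E2)² along the dynamics ẏ = (β_p s + β̂_p(1−s−y) − γ)y). Then: (i) W = 2(y − y_E2)(β_p − β̂_p)·y·s − 2β̂_p·y·(y − y_E2)²; (ii) for every δ ∈ (0, β̂_p), if |y − y_E2| ≥ δ⁻¹·(β_p − β̂_p)·s then W ≤ −2(β̂_p − δ)·y·(y − y_E2)². (This is the input-to-state stability estimate with the susceptible proportion s acting as a vanishing input.) -/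
/-- The ISS estimate for the Lyapunov function V(y) = (y − y_E2)²
along the reduced SIRI dynamics ẏ = (β_p s + β̂_p(1−s−y) − γ)y, with
y_E2 = 1 − γ/β̂_p and the susceptible proportion s acting as a vanishing input:
(i) the derivative W of V factors as
W = 2(y−y_E2)(β_p−β̂_p)ys − 2β̂_p y (y−y_E2)²; and
(ii) for every δ ∈ (0, β̂_p), if |y − y_E2| ≥ δ⁻¹(β_p−β̂_p)s then
W ≤ −2(β̂_p − δ) y (y−y_E2)². -/
theorem siri_ISS_estimate
    (βp βhp γ : ℝ) (hβ : βp > βhp) (hβhp : βhp > 0) (hγ : γ > 0)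
    (y s : ℝ) (hy : 0 ≤ y) (hs : 0 ≤ s) :
    (2 * (y - (1 - γ / βhp)) * (βp * s + βhp * (1 - s - y) - γ) * y =
      2 * (y - (1 - γ / βhp)) * (βp - βhp) * y * s -
        2 * βhp * y * (y - (1 - γ / βhp)) ^ 2) ∧
    (∀ δ : ℝ, δ ∈ Set.Ioo (0:ℝ) βhp →
      δ⁻¹ * (βp - βhp) * s ≤ |y - (1 - γ / βhp)| →
      2 * (y - (1 - γ / βhp)) * (βp * s + βhp * (1 - s - y) - γ) * y ≤
        -2 * (βhp - δ) * y * (y - (1 - γ / βhp)) ^ 2) := by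
  have hne : βhp ≠ 0 := ne_of_gt hβhp
  have hfact : (2 * (y - (1 - γ / βhp)) * (βp * s + βhp * (1 - s - y) - γ) * y =
      2 * (y - (1 - γ / βhp)) * (βp - βhp) * y * s -
        2 * βhp * y * (y - (1 - γ / βhp)) ^ 2) := by
    field_simp
    ring
  refine ⟨hfact, ?_⟩
  rintro δ ⟨hδ0, hδβ⟩ habs
  rw [hfact]
  set e := y - (1 - γ / βhp) with he
  have hkey : (βp - βhp) * s ≤ δ * |e| := by
    have := mul_le_mul_of_nonneg_left habs (le_of_lt hδ0)
    calc (βp - βhp) * s = δ * (δ⁻¹ * (βp - βhp) * s) := by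
          field_simp
      _ ≤ δ * |e| := this
  have h1 : 2 * e * (βp - βhp) * y * s ≤ 2 * δ * y * e ^ 2 := by
    have h2 : e * ((βp - βhp) * s) ≤ |e| * (δ * |e|) := by
      calc e * ((βp - βhp) * s) ≤ |e| * ((βp - βhp) * s) := by
            exact mul_le_mul_of_nonneg_right (le_abs_self e)
              (mul_nonneg (by linarith) hs)
        _ ≤ |e| * (δ * |e|) := by
            apply mul_le_mul_of_nonneg_left hkey (abs_nonneg e)
    have h3 : |e| * (δ * |e|) = δ * e ^ 2 := by
      rw [show |e| * (δ * |e|) = δ * (|e| * |e|) by ring, ← abs_mul, abs_mul_self]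
      ring
    nlinarith [sq_abs e, mul_le_mul_of_nonneg_left h2 hy]
  nlinarith
end
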